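/- Let Φ denote the standard normal CDF, let α ∈ (0, 1/2) and ψ ∈ [1/2, 1), and set c̄ = Φ^{-1}(1 − ψα) and g(θ) = θ + Φ^{-1}(1 − α + Φ(−c̄ − θ)). Then g is strictly increasing on the interval (Φ^{-1}(1 − α/2) − c̄, ∞), and g(θ) → ∞ as θ → ∞. -/

import Mathlib

/-!
With `b = -c̄ - θ` we have `g(θ) = -c̄ - b + y(b)` where `y(b) = Φ⁻¹(1 - α + Φ(b))`, and the
range `θ > Φ⁻¹(1 - α/2) - c̄` becomes `2 Φ(b) < α`. For `a < b` in that range the intervals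
`[y(a), y(b)]` and `[a, b]` carry the same Gaussian mass `Φ(b) - Φ(a)`. Since `α ≤ 1/2` one
gets `b < 0` and `-y(b) ≤ y(a) < y(b) < -b`, so the density is at least `φ(y(b))` on the first
interval and at most `φ(b) < φ(y(b))` on the second; hence `y(b) - y(a) < b - a`, which is the
monotonicity of `g`. Finally `y(b) > Φ⁻¹(1 - α)`, so `g(θ) ≥ θ + Φ⁻¹(1 - α)`.
-/

open MeasureTheory ProbabilityTheory Filter Set

/-- The standard normal cumulative distribution function `Φ`. -/
noncomputable def Phi : ℝ → ℝ := fun x => ProbabilityTheory.cdf (gaussianReal 0 1) x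

/-- The inverse `Φ⁻¹` of the standard normal CDF (junk values off `(0,1)`). -/
noncomputable def PhiInv : ℝ → ℝ := Function.invFun Phi

/-- `c̄ = Φ⁻¹(1 − ψα)`. -/
noncomputable def cbar (α ψ : ℝ) : ℝ := PhiInv (1 - ψ * α)

/-- `g(θ) = θ + Φ⁻¹(1 − α + Φ(−c̄ − θ))`. -/
noncomputable def gFun (α ψ : ℝ) (t : ℝ) : ℝ :=
  t + PhiInv (1 - α + Phi (-cbar α ψ - t))

namespace ProbabilityTheory

lemma gaussianPDFReal_le_of_abs_sub_le {μ : ℝ} {v : NNReal} {x y : ℝ}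
    (h : |x - μ| ≤ |y - μ|) : gaussianPDFReal μ v y ≤ gaussianPDFReal μ v x := by
  have hsq : (x - μ) ^ 2 ≤ (y - μ) ^ 2 := sq_le_sq.mpr h
  unfold gaussianPDFReal
  gcongr

lemma gaussianPDFReal_lt_of_abs_sub_lt {μ : ℝ} {v : NNReal} (hv : v ≠ 0) {x y : ℝ}
    (h : |x - μ| < |y - μ|) : gaussianPDFReal μ v y < gaussianPDFReal μ v x := by
  have hsq : (x - μ) ^ 2 < (y - μ) ^ 2 := sq_lt_sq.mpr h
  have hv' : (0 : ℝ) < v := by positivity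
  unfold gaussianPDFReal
  gcongr

lemma gaussianPDFReal_zero_neg (v : NNReal) (x : ℝ) :
    gaussianPDFReal 0 v (-x) = gaussianPDFReal 0 v x := by
  simp [gaussianPDFReal]

end ProbabilityTheory

local notation "φ" => gaussianPDFReal 0 1

lemma integrable_stdGaussianPDF : Integrable φ := integrable_gaussianPDFReal 0 1

lemma Phi_eq_integral (x : ℝ) : Phi x = ∫ t in Iic x, φ t := by
  rw [Phi, cdf_eq_real, measureReal_def, gaussianReal_apply_eq_integral _ one_ne_zero,
    ENNReal.toReal_ofReal]
  exact setIntegral_nonneg measurableSet_Iic fun t _ => gaussianPDFReal_nonneg 0 1 t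

lemma Phi_sub_Phi (a b : ℝ) : Phi b - Phi a = ∫ t in a..b, φ t := by
  rw [Phi_eq_integral, Phi_eq_integral]
  exact intervalIntegral.integral_Iic_sub_Iic integrable_stdGaussianPDF.integrableOn
    integrable_stdGaussianPDF.integrableOn

lemma Phi_strictMono : StrictMono Phi := fun a b hab => by
  have hpos := intervalIntegral.intervalIntegral_pos_of_pos
    integrable_stdGaussianPDF.intervalIntegrable (gaussianPDFReal_pos 0 1 · one_ne_zero) hab
  linarith [Phi_sub_Phi a b]

lemma Phi_continuous : Continuous Phi := by
  have h : Phi = fun x => Phi 0 + ∫ t in (0 : ℝ)..x, φ t := by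
    funext x
    linarith [Phi_sub_Phi 0 x]
  rw [h]
  exact continuous_const.add (integrable_stdGaussianPDF.continuous_primitive 0)

lemma Phi_neg (x : ℝ) : Phi (-x) = 1 - Phi x := by
  have hreflect := integral_comp_neg_Iic (-x) φ
  simp only [gaussianPDFReal_zero_neg, neg_neg] at hreflect
  have htotal : Phi x + ∫ t in Ioi x, φ t = 1 := by
    rw [Phi_eq_integral, intervalIntegral.integral_Iic_add_Ioi
      integrable_stdGaussianPDF.integrableOn integrable_stdGaussianPDF.integrableOn,
      integral_gaussianPDFReal_eq_one 0 one_ne_zero]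
  rw [Phi_eq_integral (-x), hreflect]
  linarith

lemma Phi_zero : Phi 0 = 1 / 2 := by
  linarith [neg_zero (G := ℝ) ▸ Phi_neg 0]

lemma Phi_mem_Ioo (x : ℝ) : Phi x ∈ Ioo (0 : ℝ) 1 := by
  have hlow : 0 ≤ Phi (x - 1) := cdf_nonneg (gaussianReal 0 1) (x - 1)
  have hup : Phi (x + 1) ≤ 1 := cdf_le_one (gaussianReal 0 1) (x + 1)
  exact ⟨hlow.trans_lt (Phi_strictMono (by linarith)),
    (Phi_strictMono (by linarith)).trans_le hup⟩

lemma exists_Phi_eq {p : ℝ} (hp : p ∈ Ioo (0 : ℝ) 1) : ∃ x, Phi x = p := by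
  obtain ⟨a, ha⟩ := ((tendsto_cdf_atBot (gaussianReal 0 1)).eventually_lt_const hp.1).exists
  obtain ⟨b, hb⟩ := ((tendsto_cdf_atTop (gaussianReal 0 1)).eventually_const_lt hp.2).exists
  have hab : a ≤ b := Phi_strictMono.le_iff_le.mp (ha.le.trans hb.le)
  obtain ⟨x, -, hx⟩ := intermediate_value_Icc hab Phi_continuous.continuousOn ⟨ha.le, hb.le⟩
  exact ⟨x, hx⟩

lemma Phi_PhiInv {p : ℝ} (hp : p ∈ Ioo (0 : ℝ) 1) : Phi (PhiInv p) = p :=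
  Function.invFun_eq (exists_Phi_eq hp)

lemma PhiInv_strictMonoOn : StrictMonoOn PhiInv (Ioo (0 : ℝ) 1) := fun p hp q hq hpq => by
  rwa [← Phi_strictMono.lt_iff_lt, Phi_PhiInv hp, Phi_PhiInv hq]

lemma Phi_lt_of_lt_neg_PhiInv_one_sub {p x : ℝ} (hp : p ∈ Ioo (0 : ℝ) 1)
    (hx : x < -PhiInv (1 - p)) : Phi x < p := by
  have h1p : 1 - p ∈ Ioo (0 : ℝ) 1 := ⟨by linarith [hp.2], by linarith [hp.1]⟩
  simpa [Phi_neg, Phi_PhiInv h1p] using Phi_strictMono hx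

lemma Phi_sub_Phi_le {a b M : ℝ} (hab : a ≤ b) (hM : ∀ t ∈ Icc a b, φ t ≤ M) :
    Phi b - Phi a ≤ (b - a) * M := by
  rw [Phi_sub_Phi, ← smul_eq_mul, ← intervalIntegral.integral_const]
  exact intervalIntegral.integral_mono_on hab integrable_stdGaussianPDF.intervalIntegrable
    intervalIntegrable_const hM

lemma le_Phi_sub_Phi {a b m : ℝ} (hab : a ≤ b) (hm : ∀ t ∈ Icc a b, m ≤ φ t) :
    (b - a) * m ≤ Phi b - Phi a := by
  rw [Phi_sub_Phi, ← smul_eq_mul, ← intervalIntegral.integral_const]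
  exact intervalIntegral.integral_mono_on hab intervalIntegrable_const
    integrable_stdGaussianPDF.intervalIntegrable hm

lemma PhiInv_one_sub_add_Phi_sub_lt {α a b : ℝ} (hα : α ≤ 1 / 2) (hab : a < b)
    (hb : 2 * Phi b < α) :
    PhiInv (1 - α + Phi b) - b < PhiInv (1 - α + Phi a) - a := by
  have hPab : Phi a < Phi b := Phi_strictMono hab
  have hPa := Phi_mem_Ioo a
  have hPb := Phi_mem_Ioo b
  have hua : 1 - α + Phi a ∈ Ioo (0 : ℝ) 1 := ⟨by linarith [hPa.1], by linarith [hPb.1]⟩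
  have hub : 1 - α + Phi b ∈ Ioo (0 : ℝ) 1 := ⟨by linarith [hPb.1], by linarith [hPb.1]⟩
  set ya := PhiInv (1 - α + Phi a)
  set yb := PhiInv (1 - α + Phi b)
  have hya : Phi ya = 1 - α + Phi a := Phi_PhiInv hua
  have hyb : Phi yb = 1 - α + Phi b := Phi_PhiInv hub
  have hb_neg : b < 0 := Phi_strictMono.lt_iff_lt.mp (by rw [Phi_zero]; linarith)
  have hyab : ya < yb := PhiInv_strictMonoOn hua hub (by linarith)
  have hneg_yb_le : -yb ≤ ya :=
    Phi_strictMono.le_iff_le.mp (by rw [Phi_neg, hya, hyb]; linarith [hPa.1, hPb.1])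
  have hyb_lt : yb < -b := Phi_strictMono.lt_iff_lt.mp (by rw [Phi_neg, hyb]; linarith)
  have hyb_pos : 0 < yb := by linarith
  have hupper : Phi b - Phi a ≤ (b - a) * φ b :=
    Phi_sub_Phi_le hab.le fun t ht => gaussianPDFReal_le_of_abs_sub_le (by
      rw [sub_zero, sub_zero, abs_of_neg hb_neg, abs_of_neg (ht.2.trans_lt hb_neg)]
      linarith [ht.2])
  have hlower : (yb - ya) * φ yb ≤ Phi yb - Phi ya :=
    le_Phi_sub_Phi hyab.le fun t ht => gaussianPDFReal_le_of_abs_sub_le (by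
      rw [sub_zero, sub_zero, abs_of_pos hyb_pos, abs_le]
      exact ⟨by linarith [ht.1], ht.2⟩)
  have hdensity : φ b < φ yb := gaussianPDFReal_lt_of_abs_sub_lt one_ne_zero (by
    rw [sub_zero, sub_zero, abs_of_neg hb_neg, abs_of_pos hyb_pos]
    exact hyb_lt)
  have hwidth : (yb - ya) * φ yb < (b - a) * φ yb :=
    calc (yb - ya) * φ yb ≤ Phi yb - Phi ya := hlower
      _ = Phi b - Phi a := by rw [hya, hyb]; ring
      _ ≤ (b - a) * φ b := hupper
      _ < (b - a) * φ yb := mul_lt_mul_of_pos_left hdensity (sub_pos.mpr hab)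
  linarith [lt_of_mul_lt_mul_right hwidth (gaussianPDFReal_nonneg 0 1 yb)]

theorem gFun_strictMonoOn_and_tendsto_atTop_general (α ψ : ℝ)
    (hα : 0 < α) (hα' : α < 1/2) :
    StrictMonoOn (gFun α ψ) (Set.Ioi (PhiInv (1 - α / 2) - cbar α ψ)) ∧
    Tendsto (gFun α ψ) atTop atTop := by
  have hhalf : α / 2 ∈ Ioo (0 : ℝ) 1 := ⟨by linarith, by linarith⟩
  have hsmall : ∀ θ ∈ Ioi (PhiInv (1 - α / 2) - cbar α ψ), 2 * Phi (-cbar α ψ - θ) < α :=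
    fun θ hθ => by
      have := Phi_lt_of_lt_neg_PhiInv_one_sub hhalf (x := -cbar α ψ - θ) (by
        rw [mem_Ioi] at hθ; linarith)
      linarith
  refine ⟨fun s hs t ht hst => ?_, ?_⟩
  · have := PhiInv_one_sub_add_Phi_sub_lt (a := -cbar α ψ - t) hα'.le (by linarith) (hsmall s hs)
    simp only [gFun]
    linarith
  · have hlower : ∀ᶠ θ in atTop, θ + PhiInv (1 - α) ≤ gFun α ψ θ := by
      filter_upwards [eventually_gt_atTop (PhiInv (1 - α / 2) - cbar α ψ)] with θ hθ
      have hP := Phi_mem_Ioo (-cbar α ψ - θ)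
      have hsm := hsmall θ hθ
      have := PhiInv_strictMonoOn (a := 1 - α) (b := 1 - α + Phi (-cbar α ψ - θ))
        ⟨by linarith, by linarith⟩ ⟨by linarith [hP.1], by linarith⟩ (by linarith [hP.1])
      simp only [gFun]
      linarith
    exact tendsto_atTop_mono' _ hlower (tendsto_atTop_add_const_right _ _ tendsto_id)

theorem gFun_strictMonoOn_and_tendsto_atTop (α ψ : ℝ)
    (hα : 0 < α) (hα' : α < 1/2) (hψ : 1/2 ≤ ψ) (hψ' : ψ < 1) :
    StrictMonoOn (gFun α ψ) (Set.Ioi (PhiInv (1 - α / 2) - cbar α ψ)) ∧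
    Tendsto (gFun α ψ) atTop atTop :=
  gFun_strictMonoOn_and_tendsto_atTop_general α ψ hα hα'
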